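/- For every real number α with 1 < α < 2 and every real number x with 0 < x ≤ 1, one has p(x) := (1/x)·((1+x)^{3−α} − (1−x)^{3−α}) − 2(3−α) < 0. Consequently, for every integer i ≥ 1, (i+1)^{3−α} − 2(3−α)i^{2−α} − (i−1)^{3−α} = i^{2−α} p(1/i) < 0. -/

import Mathlib

/-- `p(x) = (1/x)((1+x)^{3−α} − (1−x)^{3−α}) − 2(3−α)`. -/
noncomputable def pFun (α x : ℝ) : ℝ :=
  (1 / x) * ((1 + x) ^ (3 - α) - (1 - x) ^ (3 - α)) - 2 * (3 - α)

lemma Faux (α : ℝ) (h1 : 1 < α) (h2 : α < 2) :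
    ∀ x : ℝ, 0 < x → x ≤ 1 →
      (1 + x) ^ (3 - α) - (1 - x) ^ (3 - α) - 2 * (3 - α) * x < 0 := by
  set s : ℝ := 3 - α with hs
  have hs1 : 1 < s := by simp [hs]; linarith
  have hs2 : s < 2 := by simp [hs]; linarith
  set F : ℝ → ℝ := fun x => (1 + x) ^ s - (1 - x) ^ s - 2 * s * x with hF
  have hcont : ContinuousOn F (Set.Icc 0 1) := by
    apply ContinuousOn.sub
    apply ContinuousOn.sub
    · exact ((continuous_const.add continuous_id).continuousOn).rpow_const
        fun x _ => Or.inr (by linarith)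
    · exact ((continuous_const.sub continuous_id).continuousOn).rpow_const
        fun x _ => Or.inr (by linarith)
    · exact (continuous_const.mul continuous_id).continuousOn
  have hderiv : ∀ x ∈ interior (Set.Icc (0:ℝ) 1), deriv F x < 0 := by
    intro x hx
    rw [interior_Icc] at hx
    obtain ⟨hx0, hx1⟩ := hx
    have h1x : (0:ℝ) < 1 + x := by linarith
    have h1x' : (0:ℝ) < 1 - x := by linarith
    have d1 : HasDerivAt (fun y : ℝ => (1 + y) ^ s) (s * (1 + x) ^ (s - 1)) x := by
      have := HasDerivAt.rpow_const (p := s)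
        (HasDerivAt.const_add 1 (hasDerivAt_id x)) (Or.inl (ne_of_gt h1x))
      simpa using this
    have d2 : HasDerivAt (fun y : ℝ => (1 - y) ^ s) (-(s * (1 - x) ^ (s - 1))) x := by
      have := HasDerivAt.rpow_const (p := s)
        (HasDerivAt.const_sub 1 (hasDerivAt_id x)) (Or.inl (ne_of_gt h1x'))
      simpa using this
    have d3 : HasDerivAt F (s * (1 + x) ^ (s - 1) - (-(s * (1 - x) ^ (s - 1))) - 2 * s) x := by
      exact (d1.sub d2).sub (by simpa using (hasDerivAt_id x).const_mul (2 * s))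
    rw [d3.deriv]
    -- concavity : (1+x)^(s-1) + (1-x)^(s-1) < 2
    have hconc := Real.strictConcaveOn_rpow (p := s - 1) (by linarith) (by linarith)
    have hmem1 : (1 + x) ∈ Set.Ici (0:ℝ) := by simp; linarith
    have hmem2 : (1 - x) ∈ Set.Ici (0:ℝ) := by simp; linarith
    have hne : (1 + x) ≠ (1 - x) := by intro h; nlinarith
    have := hconc.2 hmem1 hmem2 hne (by norm_num : (0:ℝ) < 1/2) (by norm_num : (0:ℝ) < 1/2)
      (by norm_num)
    have hkey : (1 + x) ^ (s - 1) + (1 - x) ^ (s - 1) < 2 := by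
      simp only [smul_eq_mul] at this
      have e : (1/2 : ℝ) * (1 + x) + (1/2 : ℝ) * (1 - x) = 1 := by ring
      rw [e, Real.one_rpow] at this
      linarith
    have hspos : (0:ℝ) < s := by linarith
    nlinarith [hkey, hspos]
  have hanti : StrictAntiOn F (Set.Icc 0 1) :=
    strictAntiOn_of_deriv_neg (convex_Icc 0 1) hcont hderiv
  intro x hx0 hx1
  have h0 : F 0 = 0 := by simp [hF]
  have := hanti (Set.mem_Icc.mpr ⟨le_refl 0, by norm_num⟩)
    (Set.mem_Icc.mpr ⟨hx0.le, hx1⟩) hx0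
  rw [h0] at this
  simpa [hF] using this

/-- For `1 < α < 2`: `p(x) < 0` on `(0,1]`, and consequently, for every integer `i ≥ 1`,
`(i+1)^{3−α} − 2(3−α)i^{2−α} − (i−1)^{3−α} = i^{2−α} p(1/i) < 0`. -/
theorem stmt4 (α : ℝ) (h1 : 1 < α) (h2 : α < 2) :
    (∀ x : ℝ, 0 < x → x ≤ 1 → pFun α x < 0) ∧
    ∀ i : ℕ, 1 ≤ i →
      (((i : ℝ) + 1) ^ (3 - α) - 2 * (3 - α) * (i : ℝ) ^ (2 - α)
          - ((i : ℝ) - 1) ^ (3 - α)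
        = (i : ℝ) ^ (2 - α) * pFun α (1 / (i : ℝ))) ∧
      ((i : ℝ) + 1) ^ (3 - α) - 2 * (3 - α) * (i : ℝ) ^ (2 - α)
          - ((i : ℝ) - 1) ^ (3 - α) < 0 := by
  have hp : ∀ x : ℝ, 0 < x → x ≤ 1 → pFun α x < 0 := by
    intro x hx0 hx1
    have hF := Faux α h1 h2 x hx0 hx1
    unfold pFun
    rw [sub_neg, one_div, inv_mul_lt_iff₀ hx0]
    linarith
  refine ⟨hp, fun i hi => ?_⟩
  have hipos : (0:ℝ) < (i:ℝ) := by exact_mod_cast Nat.pos_of_ne_zero (by omega)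
  have hine : ((i:ℝ)) ≠ 0 := ne_of_gt hipos
  have heq : ((i : ℝ) + 1) ^ (3 - α) - 2 * (3 - α) * (i : ℝ) ^ (2 - α)
      - ((i : ℝ) - 1) ^ (3 - α) = (i : ℝ) ^ (2 - α) * pFun α (1 / (i : ℝ)) := by
    unfold pFun
    have e1 : 1 + 1 / (i:ℝ) = ((i:ℝ) + 1) / (i:ℝ) := by field_simp
    have e2 : 1 - 1 / (i:ℝ) = ((i:ℝ) - 1) / (i:ℝ) := by field_simp
    have hi1 : (0:ℝ) ≤ (i:ℝ) + 1 := by linarith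
    have hi2 : (0:ℝ) ≤ (i:ℝ) - 1 := by
      have : (1:ℝ) ≤ (i:ℝ) := by exact_mod_cast hi
      linarith
    rw [e1, e2, Real.div_rpow hi1 hipos.le, Real.div_rpow hi2 hipos.le]
    have hpow : ((i:ℝ)) ^ (2 - α) * (i:ℝ) = (i:ℝ) ^ (3 - α) := by
      rw [← Real.rpow_add_one hine]
      ring_nf
    have hne3 : ((i:ℝ)) ^ (3 - α) ≠ 0 := by positivity
    field_simp
    rw [← hpow]
    ring
  refine ⟨heq, ?_⟩
  rw [heq]
  have hx0 : (0:ℝ) < 1 / (i:ℝ) := by positivity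
  have hx1 : 1 / (i:ℝ) ≤ 1 := by
    rw [div_le_one hipos]; exact_mod_cast hi
  have := hp _ hx0 hx1
  have : (0:ℝ) < (i:ℝ) ^ (2 - α) := by positivity
  nlinarith [hp _ hx0 hx1]
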